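/- Let η ∈ ℂ and let λ₁, λ₂, λ₃ ∈ ℂ satisfy sinh(λᵢ−λⱼ+η) ≠ 0 for all 1 ≤ i < j ≤ 3. Then on (ℂ²)^{⊗3} the symmetric R-matrix satisfies the Yang–Baxter equation R₁₂(λ₁−λ₂) R₁₃(λ₁−λ₃) R₂₃(λ₂−λ₃) = R₂₃(λ₂−λ₃) R₁₃(λ₁−λ₃) R₁₂(λ₁−λ₂). -/

import Mathlib

open Matrix Complex Finset Filter

noncomputable section

abbrev M4 : Type := Matrix (Fin 2 × Fin 2) (Fin 2 × Fin 2) ℂ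

/-- `b(u) = sinh u / sinh (u + η)` -/
def bC (η u : ℂ) : ℂ := Complex.sinh u / Complex.sinh (u + η)

/-- `c(u) = sinh η / sinh (u + η)` -/
def cC (η u : ℂ) : ℂ := Complex.sinh η / Complex.sinh (u + η)

/-- `c⁺(u) = e^u sinh η / sinh (u + η)` -/
def cP (η u : ℂ) : ℂ := Complex.exp u * Complex.sinh η / Complex.sinh (u + η)

/-- `c⁻(u) = e^{-u} sinh η / sinh (u + η)` -/
def cM (η u : ℂ) : ℂ := Complex.exp (-u) * Complex.sinh η / Complex.sinh (u + η)

/-- The symmetric R-matrix on `ℂ² ⊗ ℂ²`. -/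
def Rsym (η u : ℂ) : M4 := Matrix.of fun a b =>
  if a = b then (if a.1 = a.2 then 1 else bC η u)
  else if a.1 = b.2 ∧ a.2 = b.1 then cC η u else 0

/-- The asymmetric R-matrix `R⁺` on `ℂ² ⊗ ℂ²`. -/
def Rplus (η u : ℂ) : M4 := Matrix.of fun a b =>
  if a = b then (if a.1 = a.2 then 1 else bC η u)
  else if a.1 = b.2 ∧ a.2 = b.1 then (if a.1 = 1 then cP η u else cM η u) else 0

/-- The asymmetric R-matrix `R⁻` on `ℂ² ⊗ ℂ²`, obtained from `R⁺`
by interchanging `c⁺` and `c⁻`. -/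
def Rminus (η u : ℂ) : M4 := Matrix.of fun a b =>
  if a = b then (if a.1 = a.2 then 1 else bC η u)
  else if a.1 = b.2 ∧ a.2 = b.1 then (if a.1 = 1 then cM η u else cP η u) else 0

/-- `emb2 N j k X` is the operator `X_{jk}` on `(ℂ²)^{⊗N}`, acting as `X` on
tensor factors `j` and `k` and as the identity elsewhere. -/
def emb2 (N : ℕ) (j k : Fin N) (X : M4) :
    Matrix (Fin N → Fin 2) (Fin N → Fin 2) ℂ :=
  Matrix.of fun a b => X (a j, a k) (b j, b k) *
    ∏ i : Fin N, if i = j ∨ i = k then 1 else (if a i = b i then 1 else 0)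

/-!
After reindexing `(ℂ²)^{⊗3}` by `Fin 8`, the Yang–Baxter equation for any R-matrix of six-vertex
shape (weights `1, b, c`) is an entrywise check in which every entry either agrees identically
or is one of three cubic relations among the weights of `R₁₂, R₁₃, R₂₃`. For the trigonometric
weights `b(u), c(u)` at spectral parameters `u, v, u + v`, clearing the denominators
`sinh (· + η)` turns each relation into a quadratic `sinh` identity, which the product-to-sum
formula reduces to a telescoping sum of `cosh`'s.
-/

namespace Complex

theorem sinh_mul_sinh (x y : ℂ) : sinh x * sinh y = (cosh (x + y) - cosh (x - y)) / 2 := by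
  rw [cosh_add, cosh_sub]; ring

theorem sinh_add_mul_sinh_add (η u w : ℂ) :
    sinh (u + η) * sinh (w + η) = sinh u * sinh w + sinh η * sinh (u + w + η) := by
  rw [mul_comm (sinh η)]
  simp only [sinh_mul_sinh]
  ring_nf

theorem sinh_mul_sinh_add_add (η u w : ℂ) :
    sinh u * sinh (u + w + η) + sinh η * sinh w = sinh (u + w) * sinh (u + η) := by
  rw [mul_comm (sinh u), mul_comm (sinh η)]
  simp only [sinh_mul_sinh]
  ring_nf

end Complex

def sixVertex (b c : ℂ) : M4 := Matrix.of fun a a' =>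
  if a = a' then (if a.1 = a.2 then 1 else b)
  else if a.1 = a'.2 ∧ a.2 = a'.1 then c else 0

theorem Rsym_eq_sixVertex (η u : ℂ) : Rsym η u = sixVertex (bC η u) (cC η u) := rfl

def tripleIndex : (Fin 3 → Fin 2) ≃ Fin 8 := finFunctionFinEquiv.trans (finCongr (by norm_num))

set_option maxHeartbeats 1000000 in
theorem sixVertex_yangBaxter {b₁ c₁ b₂ c₂ b₃ c₃ : ℂ}
    (h₁ : c₁ * b₃ + b₁ * c₂ * c₃ = b₂ * c₁)
    (h₂ : b₁ * c₃ + c₁ * c₂ * b₃ = c₃ * b₂)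
    (h₃ : c₁ * c₃ + b₁ * c₂ * b₃ = c₂) :
    emb2 3 0 1 (sixVertex b₁ c₁) * emb2 3 0 2 (sixVertex b₂ c₂) * emb2 3 1 2 (sixVertex b₃ c₃) =
      emb2 3 1 2 (sixVertex b₃ c₃) * emb2 3 0 2 (sixVertex b₂ c₂) *
        emb2 3 0 1 (sixVertex b₁ c₁) := by
  apply (Matrix.reindex tripleIndex tripleIndex).injective
  simp only [Matrix.reindex_apply, ← Matrix.submatrix_mul_equiv _ _ _ tripleIndex.symm]
  ext i j
  fin_cases i <;> fin_cases j <;>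
    simp +decide only [Matrix.mul_apply, Fin.sum_univ_eight, emb2, sixVertex, Fin.prod_univ_three,
      Matrix.submatrix_apply, Matrix.of_apply, if_true, if_false, mul_one, one_mul] <;>
    grind

theorem bC_cC_yangBaxter_relations {η u v : ℂ} (hu : sinh (u + η) ≠ 0) (hv : sinh (v + η) ≠ 0)
    (huv : sinh (u + v + η) ≠ 0) :
    cC η u * bC η v + bC η u * cC η (u + v) * cC η v = bC η (u + v) * cC η u ∧
      bC η u * cC η v + cC η u * cC η (u + v) * bC η v = cC η v * bC η (u + v) ∧
      cC η u * cC η v + bC η u * cC η (u + v) * bC η v = cC η (u + v) := by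
  have hvu := sinh_mul_sinh_add_add η v u
  rw [add_comm v u] at hvu
  simp only [bC, cC]
  refine ⟨?_, ?_, ?_⟩ <;> field_simp
  · linear_combination sinh η * hvu
  · linear_combination sinh η * sinh_mul_sinh_add_add η u v
  · linear_combination -sinh η * sinh_add_mul_sinh_add η u v

theorem statement0 (η lam1 lam2 lam3 : ℂ)
    (h12 : Complex.sinh (lam1 - lam2 + η) ≠ 0)
    (h13 : Complex.sinh (lam1 - lam3 + η) ≠ 0)
    (h23 : Complex.sinh (lam2 - lam3 + η) ≠ 0) :
    emb2 3 0 1 (Rsym η (lam1 - lam2)) * emb2 3 0 2 (Rsym η (lam1 - lam3)) *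
        emb2 3 1 2 (Rsym η (lam2 - lam3)) =
      emb2 3 1 2 (Rsym η (lam2 - lam3)) * emb2 3 0 2 (Rsym η (lam1 - lam3)) *
        emb2 3 0 1 (Rsym η (lam1 - lam2)) := by
  rw [← sub_add_sub_cancel lam1 lam2 lam3] at h13 ⊢
  obtain ⟨h₁, h₂, h₃⟩ := bC_cC_yangBaxter_relations h12 h23 h13
  simp only [Rsym_eq_sixVertex]
  exact sixVertex_yangBaxter h₁ h₂ h₃
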